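/- arXiv:1605.04554 — 5 statements merged into one kernel-verified Lean document; each statement's English description precedes it below -/
import Mathlib

section
/- For all nonnegative integers $a,b$ with $b \le a-1$ (i.e. $a-b-1 \ge 0$) and any real (or complex) $\nu$, one has $\sum_{m=0}^{b}\frac{(\nu)_m}{m!}\frac{(-\nu)_{a-m}}{(a-m)!}=\frac{(\nu)_{b+1}(-\nu)_{a-b}}{\nu\, a\, b!\,(a-b-1)!}$, where $(\nu)_m = \nu(\nu+1)\cdots(\nu+m-1)$ is the Pochhammer symbol with $(\nu)_0=1$. -/
/-!
Write `a = b + c + 1` and pull the factor `ν` out of `(ν)_{b+1}` and `-ν` out of `(-ν)_{c+1}`: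
the right-hand side becomes `-ν (ν+1)_b (1-ν)_c / (a b! c!)`, which makes sense for every `ν`.
For fixed `a` this closed form telescopes in `b`: going from `(b, c+1)` to `(b+1, c)` it changes
by exactly the summand with `m = b + 1`, because
`(c + 1 - ν)(b + 1) + ν (b + c + 2) = (c + 1)(ν + b + 1)`.
-/

open Finset
open scoped Nat

/-- Pochhammer (rising factorial) symbol `(ν)_m = ν(ν+1)⋯(ν+m-1)`, `(ν)_0 = 1`. -/
noncomputable def poch (ν : ℂ) (m : ℕ) : ℂ := (ascPochhammer ℂ m).eval ν

open Polynomial in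
theorem ascPochhammer_succ_eval_left {R : Type*} [CommSemiring R] (n : ℕ) (x : R) :
    (ascPochhammer R (n + 1)).eval x = x * (ascPochhammer R n).eval (x + 1) := by
  rw [ascPochhammer_succ_left, eval_mul, eval_X, eval_comp, eval_add, eval_X, eval_one]

theorem ascPochhammer_succ_eval_neg {R : Type*} [CommRing R] (n : ℕ) (x : R) :
    (ascPochhammer R (n + 1)).eval (-x) = -x * (ascPochhammer R n).eval (1 - x) := by
  rw [ascPochhammer_succ_eval_left, neg_add_eq_sub]

theorem sum_ascPochhammer_eval_mul_ascPochhammer_eval_neg {K : Type*} [Field K] [CharZero K]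
    (x : K) (b c : ℕ) :
    ∑ m ∈ range (b + 1),
        (ascPochhammer K m).eval x / m ! * ((ascPochhammer K (b + c + 1 - m)).eval (-x) /
          (b + c + 1 - m)!)
      = -x * (ascPochhammer K b).eval (x + 1) * (ascPochhammer K c).eval (1 - x) /
          (((b + c + 1 : ℕ) : K) * b ! * c !) := by
  induction b generalizing c with
  | zero =>
    rw [sum_range_one, Nat.sub_zero, zero_add, ascPochhammer_succ_eval_neg, Nat.factorial_succ]
    push_cast
    field_simp
    simp
  | succ b ih =>
    rw [sum_range_succ, show b + 1 + c + 1 = b + (c + 1) + 1 by ring, ih (c + 1),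
      show b + (c + 1) + 1 - (b + 1) = c + 1 by omega, ascPochhammer_succ_eval_neg, ascPochhammer_succ_eval_left b x,
      ascPochhammer_succ_eval b (x + 1), ascPochhammer_succ_eval c (1 - x), Nat.factorial_succ,
      Nat.factorial_succ]
    have hcast : ((b + (c + 1) + 1 : ℕ) : K) ≠ 0 := Nat.cast_ne_zero.mpr (Nat.succ_ne_zero _)
    push_cast at hcast ⊢
    field_simp
    ring

theorem sum_poch_factorized_general (ν : ℂ) (a b : ℕ) (hab : b + 1 ≤ a) :
    ∑ m ∈ Finset.range (b + 1),
        poch ν m / (Nat.factorial m : ℂ) * (poch (-ν) (a - m) / (Nat.factorial (a - m) : ℂ))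
      = poch ν (b + 1) * poch (-ν) (a - b) /
        (ν * (a : ℂ) * (Nat.factorial b : ℂ) * (Nat.factorial (a - b - 1) : ℂ)) := by
  obtain ⟨c, rfl⟩ : ∃ c, a = b + c + 1 := ⟨a - b - 1, by omega⟩
  rw [show b + c + 1 - b = c + 1 by omega, show c + 1 - 1 = c by omega]
  simp only [poch]
  rw [sum_ascPochhammer_eval_mul_ascPochhammer_eval_neg, ascPochhammer_succ_eval_left,
    ascPochhammer_succ_eval_neg]
  rcases eq_or_ne ν 0 with rfl | hν
  · simp
  · field_simp

/-- For nonnegative integers `a, b` with `b + 1 ≤ a` and `ν ≠ 0`,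
`∑_{m=0}^{b} (ν)_m/m! ⋅ (-ν)_{a-m}/(a-m)! = (ν)_{b+1}(-ν)_{a-b} / (ν a b! (a-b-1)!)`. -/
theorem sum_poch_factorized (ν : ℂ) (hν : ν ≠ 0) (a b : ℕ) (hab : b + 1 ≤ a) :
    ∑ m ∈ Finset.range (b + 1),
        poch ν m / (Nat.factorial m : ℂ) * (poch (-ν) (a - m) / (Nat.factorial (a - m) : ℂ))
      = poch ν (b + 1) * poch (-ν) (a - b) /
        (ν * (a : ℂ) * (Nat.factorial b : ℂ) * (Nat.factorial (a - b - 1) : ℂ)) :=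
  sum_poch_factorized_general ν a b hab
end

section
/- For all nonnegative integers $a,b$ and any complex $\nu$ with $\nu\ne 0$ and $a+\nu\ne 0$, one has $\sum_{m=0}^{b}\frac{(-\nu)_m}{m!}\frac{(\nu)_{a+m}}{(a+m)!}=-\frac{(-\nu)_{b+1}(\nu)_{a+b+1}}{\nu(a+\nu)\,b!\,(a+b)!}$. -/
/-!
The sum telescopes. Write `t m` for its `m`-th term and
`B b = (-ν)_{b+1} (ν)_{a+b+1} / (b! (a+b)!)`. Pulling the last factors out of the two
Pochhammer symbols gives `B b = (b - ν)(a + b + ν) t b` and `B (b-1) = b (a + b) t b`, and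
`(b - ν)(a + b + ν) - b (a + b) = -ν (a + ν)`; hence `ν (a + ν) ∑_{m ≤ b} t m = -B b`.
-/

open Finset

open Nat

lemma poch_zero (ν : ℂ) : poch ν 0 = 1 := by simp [poch]

lemma poch_succ (ν : ℂ) (n : ℕ) : poch ν (n + 1) = poch ν n * (ν + n) := by
  simp [poch, ascPochhammer_succ_right]

section Telescoping

variable (ν : ℂ) (a : ℕ)

noncomputable def pochTerm (m : ℕ) : ℂ :=
  poch (-ν) m / (m ! : ℂ) * (poch ν (a + m) / ((a + m)! : ℂ))

noncomputable def pochBoundary (b : ℕ) : ℂ :=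
  poch (-ν) (b + 1) * poch ν (a + b + 1) / ((b ! : ℂ) * ((a + b)! : ℂ))

lemma pochBoundary_zero : pochBoundary ν a 0 = -(ν * (a + ν)) * pochTerm ν a 0 := by
  simp only [pochBoundary, pochTerm, zero_add, add_zero, poch_succ, poch_zero, factorial_zero,
    cast_zero, cast_one]
  ring

lemma pochBoundary_succ (b : ℕ) :
    pochBoundary ν a (b + 1) = pochBoundary ν a b - ν * (a + ν) * pochTerm ν a (b + 1) := by
  rw [pochBoundary, pochBoundary, pochTerm, show a + (b + 1) = a + b + 1 by omega,
    poch_succ (-ν) (b + 1), poch_succ ν (a + b + 1), factorial_succ b, factorial_succ (a + b)]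
  have hb : (b ! : ℂ) ≠ 0 := by exact_mod_cast factorial_ne_zero b
  have hab : ((a + b)! : ℂ) ≠ 0 := by exact_mod_cast factorial_ne_zero (a + b)
  have hb1 : (b + 1 : ℂ) ≠ 0 := by exact_mod_cast succ_ne_zero b
  have hab1 : (a + b + 1 : ℂ) ≠ 0 := by exact_mod_cast succ_ne_zero (a + b)
  push_cast
  field_simp
  ring

lemma mul_sum_pochTerm (b : ℕ) :
    ν * (a + ν) * ∑ m ∈ range (b + 1), pochTerm ν a m = -pochBoundary ν a b := by
  induction b with
  | zero => simp [pochBoundary_zero]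
  | succ b ih => rw [sum_range_succ, mul_add, ih, pochBoundary_succ]; ring

end Telescoping

/-- For nonnegative integers `a, b` and `ν ≠ 0`, `ν ≠ -a`,
`∑_{m=0}^{b} (-ν)_m/m! ⋅ (ν)_{a+m}/(a+m)! = -(-ν)_{b+1}(ν)_{a+b+1} / (ν(a+ν) b! (a+b)!)`. -/
theorem sum_poch_factorized' (ν : ℂ) (hν : ν ≠ 0) (a b : ℕ) (hν' : (a : ℂ) + ν ≠ 0) :
    ∑ m ∈ Finset.range (b + 1),
        poch (-ν) m / (Nat.factorial m : ℂ) * (poch ν (a + m) / (Nat.factorial (a + m) : ℂ))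
      = -(poch (-ν) (b + 1) * poch ν (a + b + 1)) /
        (ν * ((a : ℂ) + ν) * (Nat.factorial b : ℂ) * (Nat.factorial (a + b) : ℂ)) := by
  have h := mul_sum_pochTerm ν a b
  rw [pochBoundary, ← eq_inv_mul_iff_mul_eq₀ (mul_ne_zero hν hν')] at h
  refine h.trans ?_
  field_simp
end

section
/- As formal power series in $z$ and $w$ (or for $|z|,|w|<1$), $\frac{(1-z)^{\nu}(1-w)^{-\nu}}{z-w}=\frac{1}{z-w}+\sum_{a,b\ge 0}\frac{(-\nu)_{a+1}(\nu)_{b+1}}{(a+b+1)\,\nu\, a!\, b!}\, z^a w^b$ for any complex $\nu \ne 0$. -/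
/-- Coefficient `c_{a,b} = (-ν)_{a+1}(ν)_{b+1} / ((a+b+1) ν a! b!)` of the double series. -/
noncomputable def seriesCoeff (ν : ℂ) (a b : ℕ) : ℂ :=
  poch (-ν) (a + 1) * poch ν (b + 1) /
    (((a : ℂ) + b + 1) * ν * (Nat.factorial a : ℂ) * (Nat.factorial b : ℂ))

/-!
Write `A_a = (-ν)_a / a!` and `B_b = (ν)_b / b!` for the coefficients of `(1-z)^ν` and
`(1-w)^{-ν}`, so that `c_{a,b} = (a+1)(b+1) A_{a+1} B_{b+1} / ((a+b+1) ν)`. The ratio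
recurrences `A_{a+1} = A_a (a-ν)/(a+1)` and `B_{b+1} = B_b (b+ν)/(b+1)` reduce
`c_{a,b+1} - c_{a+1,b}` to `A_{a+1} B_{b+1} ((a+1)(b+1+ν) - (a+1-ν)(b+1)) / ((a+b+2) ν)`,
and the bracket is `ν (a+b+2)`. On the boundary `B_1 = ν` and `A_1 = -ν` give `c_{a,0} = A_{a+1}`
and `c_{0,b} = -B_{b+1}`.
-/

noncomputable def normalizedPoch (ν : ℂ) (n : ℕ) : ℂ := poch ν n / n.factorial

lemma normalizedPoch_zero (ν : ℂ) : normalizedPoch ν 0 = 1 := by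
  simp [normalizedPoch, poch]

lemma normalizedPoch_succ (ν : ℂ) (n : ℕ) :
    normalizedPoch ν (n + 1) = normalizedPoch ν n * (ν + n) / (n + 1) := by
  simp only [normalizedPoch, poch, ascPochhammer_succ_right, Polynomial.eval_mul,
    Polynomial.eval_add, Polynomial.eval_X, Polynomial.eval_natCast, Nat.factorial_succ]
  push_cast
  field_simp

lemma seriesCoeff_eq_normalizedPoch (ν : ℂ) (a b : ℕ) :
    seriesCoeff ν a b = (a + 1) * (b + 1) / ((a + b + 1) * ν) *
      (normalizedPoch (-ν) (a + 1) * normalizedPoch ν (b + 1)) := by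
  simp only [seriesCoeff, normalizedPoch, Nat.factorial_succ]
  push_cast
  field_simp

section

variable {ν : ℂ}

lemma seriesCoeff_zero_right (hν : ν ≠ 0) (a : ℕ) :
    seriesCoeff ν a 0 = normalizedPoch (-ν) (a + 1) := by
  rw [seriesCoeff_eq_normalizedPoch, normalizedPoch_succ ν 0, normalizedPoch_zero]
  push_cast
  field_simp
  ring

lemma seriesCoeff_zero_left (hν : ν ≠ 0) (b : ℕ) :
    seriesCoeff ν 0 b = -normalizedPoch ν (b + 1) := by
  rw [seriesCoeff_eq_normalizedPoch, normalizedPoch_succ (-ν) 0, normalizedPoch_zero]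
  push_cast
  field_simp
  ring

lemma seriesCoeff_succ_right_sub_succ_left (hν : ν ≠ 0) (a b : ℕ) :
    seriesCoeff ν a (b + 1) - seriesCoeff ν (a + 1) b =
      normalizedPoch (-ν) (a + 1) * normalizedPoch ν (b + 1) := by
  rw [seriesCoeff_eq_normalizedPoch, seriesCoeff_eq_normalizedPoch,
    normalizedPoch_succ ν (b + 1), normalizedPoch_succ (-ν) (a + 1)]
  have ha : (a : ℂ) + 1 + 1 ≠ 0 := by exact_mod_cast (a + 1).succ_ne_zero
  have hb : (b : ℂ) + 1 + 1 ≠ 0 := by exact_mod_cast (b + 1).succ_ne_zero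
  have hab : (a : ℂ) + b + 2 ≠ 0 := by exact_mod_cast (a + b + 1).succ_ne_zero
  push_cast
  rw [show (a : ℂ) + (b + 1) + 1 = a + b + 2 by ring, show (a : ℂ) + 1 + b + 1 = a + b + 2 by ring]
  field_simp
  ring

end

/-- The identity `(1-z)^ν (1-w)^{-ν} - 1 = (z-w) ∑_{a,b≥0} c_{a,b} z^a w^b` as formal
power series in two variables, stated coefficientwise: the coefficient of `z^a w^b` on the
left is `(-ν)_a/a! ⋅ (ν)_b/b!` minus `1` at `(a,b)=(0,0)`, and on the right it is
`c_{a-1,b} - c_{a,b-1}` (terms present only when the index is nonnegative). -/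
theorem binomial_double_series_identity (ν : ℂ) (hν : ν ≠ 0) (a b : ℕ) :
    poch (-ν) a / (Nat.factorial a : ℂ) * (poch ν b / (Nat.factorial b : ℂ))
        - (if a = 0 ∧ b = 0 then 1 else 0)
      = (if 1 ≤ a then seriesCoeff ν (a - 1) b else 0)
        - (if 1 ≤ b then seriesCoeff ν a (b - 1) else 0) := by
  change normalizedPoch (-ν) a * normalizedPoch ν b - _ = _
  match a, b with
  | 0, 0 => simp [normalizedPoch_zero]
  | a + 1, 0 => simp [normalizedPoch_zero, seriesCoeff_zero_right hν]
  | 0, b + 1 => simp [normalizedPoch_zero, seriesCoeff_zero_left hν]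
  | a + 1, b + 1 => simp [seriesCoeff_succ_right_sub_succ_left hν]
end

section
/- Sum rule for $U(1)$ matrix elements: for complex parameters $\alpha_1,\alpha_2$ and $|t|<1$, $\sum_{Y}t^{|Y|}\,\frac{Z_b(\alpha_1|\emptyset,Y)\,Z_b(\alpha_2|Y,\emptyset)}{Z_0(Y)}=(1-t)^{\alpha_1\alpha_2}$, where the sum runs over all partitions $Y$. -/
open Finset

/-- Arm length (possibly negative, as a rational) of the box `s = (i,j)` relative to the
Young diagram `Y`: `a_Y(s) = Y_i - j - 1` (0-indexed rows/columns). -/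
noncomputable def armQ (Y : YoungDiagram) (s : ℕ × ℕ) : ℚ :=
  (Y.rowLen s.1 : ℚ) - s.2 - 1

/-- Leg length (possibly negative, as a rational) of the box `s = (i,j)` relative to the
Young diagram `Y`: `l_Y(s) = Y'_j - i - 1` (0-indexed rows/columns). -/
noncomputable def legQ (Y : YoungDiagram) (s : ℕ × ℕ) : ℚ :=
  (Y.colLen s.2 : ℚ) - s.1 - 1

/-- Nekrasov bifundamental factor at `c = 1`:
`Z_b(ν|Y',Y) = ∏_{t∈Y}(1 + a_Y(t) + l_{Y'}(t) + ν) ⋅ ∏_{s∈Y'}(1 + a_{Y'}(s) + l_Y(s) - ν)`. -/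
noncomputable def Zb (ν : ℚ) (Y' Y : YoungDiagram) : ℚ :=
  (∏ t ∈ Y.cells, (1 + armQ Y t + legQ Y' t + ν)) *
    ∏ s ∈ Y'.cells, (1 + armQ Y' s + legQ Y s - ν)

/-- `Z₀(Y) = Z_b(0|Y,Y)`. -/
noncomputable def Z0 (Y : YoungDiagram) : ℚ := Zb 0 Y Y

/-!
Writing `C_x(Y) = ∏_{(i,j) ∈ Y} (x + j - i)` and `H(Y)` for the hook product, the summand is
`C_{α₁}(Y) C_{-α₂}(Y) / H(Y)²`, and it suffices to prove the recursion
`(n+1) Σ_{n+1} = (xy + n) Σ_n` for `Σ_n = ∑_{|Y| = n} C_x(Y) C_y(Y) / H(Y)²`, which follows from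
Kerov's interpolation argument.
Encode a diagram with at most `N` rows by its beta numbers `b_r = Y_r + N - 1 - r`. The weight of
removing the corner in row `i` of `μ`, and that of adding a box in row `i` to `Y`, are both of the
form `p(b_i) / ∏_{j ≠ i} (b_i - b_j)` with `deg p = N + 1`. Summed over `i`, such expressions only
see the top three coefficients of `p`, which gives `∑ (removal) = |μ|` and
`∑ (addition) = xy + |Y|`. The Frobenius formula `H(Y) ∏_{i<r} (b_i - b_r) = ∏_i b_i!` controls
`H(Y + □) / H(Y)` and shows that the two weights, multiplied by `C_x C_y / H²`, agree on every pair
`(Y, Y + □)`. Double counting these pairs gives the recursion.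
-/

open Function Polynomial
open scoped Nat

/-! ### An interpolation identity -/

namespace Multiset

variable {R : Type*} [CommRing R]

theorem eval_prod_X_sub_C (m : Multiset R) (x : R) :
    eval x (m.map fun a => X - C a).prod = (m.map (x - ·)).prod := by
  rw [eval_multiset_prod, map_map]
  simp

theorem coeff_prod_X_sub_C_card (m : Multiset R) :
    (m.map fun a => X - C a).prod.coeff (card m) = 1 := by
  nontriviality R
  simpa [natDegree_multiset_prod_X_sub_C_eq_card] using
    (monic_multiset_prod_of_monic m (fun a => X - C a) fun a _ => monic_X_sub_C a).coeff_natDegree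

theorem coeff_X_mul_prod_X_sub_C_card (m : Multiset R) :
    (X * (m.map fun a => X - C a).prod).coeff (card m) = -m.sum := by
  induction m using Multiset.induction_on with
  | empty => simp
  | cons a m ih =>
    rw [map_cons, prod_cons, card_cons, sum_cons,
      show X * ((X - C a) * (m.map fun a => X - C a).prod) =
        X * (X * (m.map fun a => X - C a).prod) - C a * (X * (m.map fun a => X - C a).prod) by ring,
      coeff_sub, coeff_X_mul, coeff_C_mul, coeff_X_mul, ih, coeff_prod_X_sub_C_card]
    ring

theorem two_mul_coeff_X_sq_mul_prod_X_sub_C_card (m : Multiset R) :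
    2 * (X ^ 2 * (m.map fun a => X - C a).prod).coeff (card m) =
      m.sum ^ 2 - (m.map (· ^ 2)).sum := by
  induction m using Multiset.induction_on with
  | empty => simp
  | cons a m ih =>
    rw [map_cons, prod_cons, card_cons, sum_cons, map_cons, sum_cons,
      show X ^ 2 * ((X - C a) * (m.map fun a => X - C a).prod) =
        X * (X ^ 2 * (m.map fun a => X - C a).prod) -
          C a * X * (X * (m.map fun a => X - C a).prod) by ring,
      coeff_sub, coeff_X_mul, mul_assoc, coeff_C_mul, coeff_X_mul, coeff_X_mul_prod_X_sub_C_card]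
    linear_combination ih

section Reduction

variable {w m : Multiset R}

theorem coeff_prod_X_sub_C_sub_mul (j : ℕ) :
    ((w.map fun a => X - C a).prod -
        (X + C (m.sum - w.sum)) * (m.map fun a => X - C a).prod).coeff j =
      (w.map fun a => X - C a).prod.coeff j - (X * (m.map fun a => X - C a).prod).coeff j -
        (m.sum - w.sum) * (m.map fun a => X - C a).prod.coeff j := by
  simp only [add_mul, coeff_sub, coeff_add, coeff_C_mul]
  ring

theorem degree_prod_X_sub_C_sub_mul_lt [Nontrivial R] (hw : card w = card m + 1) :
    ((w.map fun a => X - C a).prod - (X + C (m.sum - w.sum)) * (m.map fun a => X - C a).prod).degree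
      < (card m : WithBot ℕ) := by
  have hw' := coeff_X_mul_prod_X_sub_C_card w
  rw [hw, coeff_X_mul] at hw'
  rw [degree_lt_iff_coeff_zero]
  intro j hj
  rw [coeff_prod_X_sub_C_sub_mul]
  have hQ : (m.map fun a => X - C a).prod.natDegree = card m :=
    natDegree_multiset_prod_X_sub_C_eq_card m
  have hP : (w.map fun a => X - C a).prod.natDegree = card m + 1 := by
    rw [natDegree_multiset_prod_X_sub_C_eq_card, hw]
  rcases (show j = card m ∨ j = card m + 1 ∨ card m + 2 ≤ j by omega) with rfl | rfl | hj
  · rw [hw', coeff_X_mul_prod_X_sub_C_card, coeff_prod_X_sub_C_card]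
    ring
  · have hQ₁ : (m.map fun a => X - C a).prod.coeff (card m + 1) = 0 :=
      coeff_eq_zero_of_natDegree_lt (by omega)
    rw [coeff_X_mul, hQ₁, coeff_prod_X_sub_C_card m, ← hw, coeff_prod_X_sub_C_card w]
    ring
  · obtain ⟨j, rfl⟩ := Nat.exists_eq_add_of_le hj
    rw [show card m + 2 + j = (card m + 1 + j) + 1 by omega, coeff_X_mul,
      coeff_eq_zero_of_natDegree_lt (by omega : _ < card m + 1 + j + 1),
      coeff_eq_zero_of_natDegree_lt (by omega : _ < card m + 1 + j),
      coeff_eq_zero_of_natDegree_lt (by omega : _ < card m + 1 + j + 1)]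
    ring

theorem two_mul_coeff_prod_X_sub_C_sub_mul (hw : card w = card m + 1) {k : ℕ}
    (hk : card m = k + 1) :
    2 * ((w.map fun a => X - C a).prod -
        (X + C (m.sum - w.sum)) * (m.map fun a => X - C a).prod).coeff k =
      (w.sum - m.sum) ^ 2 + (m.map (· ^ 2)).sum - (w.map (· ^ 2)).sum := by
  have h₁ := two_mul_coeff_X_sq_mul_prod_X_sub_C_card w
  have h₂ := two_mul_coeff_X_sq_mul_prod_X_sub_C_card m
  have h₃ := coeff_X_mul_prod_X_sub_C_card m
  rw [hw, hk, pow_two, mul_assoc, coeff_X_mul, coeff_X_mul] at h₁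
  rw [hk, pow_two, mul_assoc, coeff_X_mul] at h₂
  rw [hk, coeff_X_mul] at h₃
  rw [coeff_prod_X_sub_C_sub_mul]
  linear_combination h₁ - h₂ - 2 * (m.sum - w.sum) * h₃

end Reduction

end Multiset

namespace Lagrange

variable {F ι : Type*} [Field F] [DecidableEq ι]

theorem two_mul_sum_prod_sub_mul_nodalWeight {s : Finset ι} {c : ι → F} (hc : Set.InjOn c s)
    (w : Multiset F) (hw : Multiset.card w = #s + 1) :
    2 * ∑ i ∈ s, (w.map (c i - ·)).prod * nodalWeight s c i =
      (w.sum - ∑ i ∈ s, c i) ^ 2 + ∑ i ∈ s, c i ^ 2 - (w.map (· ^ 2)).sum := by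
  rcases s.eq_empty_or_nonempty with rfl | hs
  · obtain ⟨a, rfl⟩ := Multiset.card_eq_one.mp hw
    simp
  obtain ⟨k, hk⟩ : ∃ k, #s = k + 1 := Nat.exists_eq_add_one.mpr hs.card_pos
  set m := s.val.map c
  have hm : Multiset.card m = #s := Multiset.card_map _ _
  set P := (w.map fun a => X - C a).prod - (X + C (m.sum - w.sum)) * (m.map fun a => X - C a).prod
  have heval : ∀ i ∈ s, P.eval (c i) = (w.map (c i - ·)).prod := by
    intro i hi
    have hroot : (m.map fun a => X - C a).prod.eval (c i) = 0 := by
      rw [Multiset.eval_prod_X_sub_C]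
      exact Multiset.prod_eq_zero
        (Multiset.mem_map.mpr ⟨c i, Multiset.mem_map_of_mem c hi, sub_self _⟩)
    rw [eval_sub, eval_mul, hroot, mul_zero, sub_zero, Multiset.eval_prod_X_sub_C]
  -- `P` takes the values `∏ (c i - w)` at the nodes and has degree `< #s`, so the sum is
  -- its coefficient of `X ^ (#s - 1)`.
  have hdeg : P.degree < #s := hm ▸ Multiset.degree_prod_X_sub_C_sub_mul_lt (hm ▸ hw)
  have hsq : (m.map (· ^ 2)).sum = ∑ i ∈ s, c i ^ 2 := by simp [m, Multiset.map_map]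
  rw [← hsq, show ∑ i ∈ s, c i = m.sum from rfl,
    ← Multiset.two_mul_coeff_prod_X_sub_C_sub_mul (hm ▸ hw) (hm.trans hk), ← Nat.add_sub_cancel k 1,
    ← hk, coeff_eq_sum hc hdeg, mul_sum, mul_sum]
  refine sum_congr rfl fun i hi => ?_
  rw [heval i hi, nodalWeight, prod_inv_distrib, div_eq_mul_inv]

end Lagrange

/-! ### Kerov's transition weights -/

section TransitionWeights

variable {F : Type*} [Field F] {N i : ℕ} {c : ℕ → F}

open Lagrange

/-- The weight of removing the corner in row `i` from a diagram with beta numbers `c`, written as a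
polynomial in `c i` times the Lagrange weight. -/
def removalWeight (N : ℕ) (c : ℕ → F) (i : ℕ) : F :=
  -(c i * ∏ j ∈ range N, (c i - (c j + 1))) * nodalWeight (range N) c i

/-- For a diagram with beta numbers `c` on `N + 1` rows, the weight of adding a box in row `i`,
which has content `c i - N`. -/
def additionWeight (N : ℕ) (x y : F) (c : ℕ → F) (i : ℕ) : F :=
  (x + c i - N) * (y + c i - N) * (∏ j ∈ range N, (c i - (c j - 1))) *
    nodalWeight (range (N + 1)) c i

theorem sum_removalWeight (hc : Set.InjOn c (range N)) :
    2 * ∑ i ∈ range N, removalWeight N c i = 2 * ∑ i ∈ range N, c i - N * (N - 1) := by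
  have key := two_mul_sum_prod_sub_mul_nodalWeight hc (0 ::ₘ (range N).val.map (c · + 1))
    (by simp)
  simp only [Multiset.map_cons, Multiset.prod_cons, Multiset.sum_cons, Multiset.map_map,
    Function.comp_def, prod_map_val, sum_map_val, sub_zero, zero_add] at key
  have h₁ : ∑ j ∈ range N, (c j + 1) = ∑ j ∈ range N, c j + N := by
    rw [sum_add_distrib]
    simp
  have h₂ : ∑ j ∈ range N, (c j + 1) ^ 2 = ∑ j ∈ range N, c j ^ 2 + 2 * ∑ j ∈ range N, c j + N := by
    simp only [add_sq, sum_add_distrib, ← sum_mul, ← mul_sum]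
    simp
  rw [h₁, h₂] at key
  simp only [removalWeight, neg_mul, sum_neg_distrib, mul_neg, key]
  ring

theorem sum_additionWeight (hc : Set.InjOn c (range (N + 1))) (hlast : c N = 0) (x y : F) :
    2 * ∑ i ∈ range (N + 1), additionWeight N x y c i =
      2 * x * y + 2 * ∑ i ∈ range (N + 1), c i - (N + 1) * N := by
  have key := two_mul_sum_prod_sub_mul_nodalWeight hc
    ((N - x) ::ₘ (N - y) ::ₘ (range N).val.map (c · - 1)) (by simp)
  simp only [Multiset.map_cons, Multiset.prod_cons, Multiset.sum_cons, Multiset.map_map,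
    Function.comp_def, prod_map_val, sum_map_val] at key
  have h₀ : ∑ j ∈ range (N + 1), c j = ∑ j ∈ range N, c j := by
    rw [sum_range_succ, hlast, add_zero]
  have h₀' : ∑ j ∈ range (N + 1), c j ^ 2 = ∑ j ∈ range N, c j ^ 2 := by
    rw [sum_range_succ, hlast]
    ring
  have h₁ : ∑ j ∈ range N, (c j - 1) = ∑ j ∈ range N, c j - N := by
    rw [sum_sub_distrib]
    simp
  have h₂ : ∑ j ∈ range N, (c j - 1) ^ 2 = ∑ j ∈ range N, c j ^ 2 - 2 * ∑ j ∈ range N, c j + N := by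
    simp only [sub_sq, sum_add_distrib, sum_sub_distrib, ← sum_mul, ← mul_sum]
    simp
  rw [h₀, h₀', h₁, h₂] at key
  have hterm : ∀ i, additionWeight N x y c i = ((c i - (N - x)) * ((c i - (N - y)) *
      ∏ j ∈ range N, (c i - (c j - 1)))) * nodalWeight (range (N + 1)) c i := fun i => by
    rw [additionWeight]
    ring
  simp only [hterm, key, h₀]
  ring

theorem removalWeight_update_self (c : ℕ → F) (hi : i < N) (a : F) :
    removalWeight N (update c i a) i =
      a * (∏ r ∈ (range N).erase i, (a - (c r + 1))) / ∏ r ∈ (range N).erase i, (a - c r) := by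
  have hne : ∀ r ∈ (range N).erase i, update c i a r = c r :=
    fun r hr => update_of_ne (mem_erase.mp hr).1 _ _
  have hprod : ∏ j ∈ range N, (a - (update c i a j + 1)) =
      -∏ r ∈ (range N).erase i, (a - (c r + 1)) := by
    rw [← mul_prod_erase _ _ (mem_range.mpr hi), update_self,
      prod_congr rfl fun r hr => by rw [hne r hr]]
    ring
  have hweight : nodalWeight (range N) (update c i a) i =
      (∏ r ∈ (range N).erase i, (a - c r))⁻¹ := by
    rw [nodalWeight, prod_inv_distrib, update_self]
    exact congrArg _ (prod_congr rfl fun r hr => by rw [hne r hr])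
  rw [removalWeight, update_self, hprod, hweight]
  ring

theorem additionWeight_mul_add_one (hlast : c N = 0) (hi : i < N + 1) (x y : F) :
    additionWeight N x y c i * (c i + 1) = (x + c i - N) * (y + c i - N) *
      (∏ r ∈ (range (N + 1)).erase i, (c i + 1 - c r)) /
        ∏ r ∈ (range (N + 1)).erase i, (c i - c r) := by
  have hprod : (∏ j ∈ range N, (c i - (c j - 1))) * (c i + 1) =
      ∏ r ∈ (range (N + 1)).erase i, (c i + 1 - c r) := by
    have hfull : ∏ j ∈ range (N + 1), (c i + 1 - c j) =
        ∏ r ∈ (range (N + 1)).erase i, (c i + 1 - c r) := by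
      rw [← mul_prod_erase _ _ (mem_range.mpr hi), add_sub_cancel_left, one_mul]
    rw [← hfull, prod_range_succ, hlast, sub_zero]
    exact congrArg (· * _) (prod_congr rfl fun j _ => by ring)
  rw [additionWeight, nodalWeight, prod_inv_distrib, ← hprod]
  ring

end TransitionWeights

/-! ### The Vandermonde product -/

section Vandermonde

variable {R : Type*} [CommRing R]

def vandermondeProd (N : ℕ) (b : ℕ → R) : R := ∏ i ∈ range N, ∏ r ∈ Ioo i N, (b i - b r)

theorem Finset.range_erase_eq_range_union_Ioo {k N : ℕ} (hk : k < N) :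
    (range N).erase k = range k ∪ Ioo k N := by
  ext r
  simp only [mem_erase, mem_range, mem_union, mem_Ioo]
  omega

theorem vandermondeProd_eq_mul_prod_erase {N k : ℕ} (hk : k < N) (b : ℕ → R) :
    vandermondeProd N b = (-1) ^ k * (∏ r ∈ (range N).erase k, (b k - b r)) *
      ∏ i ∈ (range N).erase k, ∏ r ∈ (Ioo i N).erase k, (b i - b r) := by
  have hrow : ∀ i ∈ (range N).erase k, ∏ r ∈ Ioo i N, (b i - b r) =
      (if i < k then b i - b k else 1) * ∏ r ∈ (Ioo i N).erase k, (b i - b r) := by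
    intro i hi
    split_ifs with hik
    · exact (mul_prod_erase _ (fun r => b i - b r) (mem_Ioo.mpr ⟨hik, hk⟩)).symm
    · rw [one_mul, erase_eq_of_notMem]
      simp only [mem_Ioo, not_and]
      exact fun h => absurd h hik
  have hlt : ∏ i ∈ (range N).erase k, (if i < k then b i - b k else 1) =
      (-1) ^ k * ∏ r ∈ range k, (b k - b r) := by
    rw [prod_ite, prod_const_one, mul_one,
      show ((range N).erase k).filter (· < k) = range k by
        ext r
        simp only [mem_filter, mem_erase, mem_range]
        omega,
      show ((-1) ^ k : R) = (-1) ^ #(range k) by rw [card_range], ← prod_neg]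
    exact prod_congr rfl fun r _ => by ring
  have hsplit : ∏ r ∈ (range N).erase k, (b k - b r) =
      (∏ r ∈ range k, (b k - b r)) * ∏ r ∈ Ioo k N, (b k - b r) := by
    rw [range_erase_eq_range_union_Ioo hk, prod_union (disjoint_left.mpr fun r h₁ h₂ => by
      simp only [mem_range, mem_Ioo] at h₁ h₂
      omega)]
  rw [vandermondeProd, ← mul_prod_erase _ _ (mem_range.mpr hk), prod_congr rfl hrow,
    prod_mul_distrib, hlt, hsplit]
  ring

theorem vandermondeProd_update_mul {N k : ℕ} (hk : k < N) (b : ℕ → R) (x : R) :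
    vandermondeProd N (update b k x) * ∏ r ∈ (range N).erase k, (b k - b r) =
      vandermondeProd N b * ∏ r ∈ (range N).erase k, (x - b r) := by
  have hne : ∀ r ∈ (range N).erase k, update b k x r = b r :=
    fun r hr => update_of_ne (mem_erase.mp hr).1 _ _
  have hrest : ∏ i ∈ (range N).erase k, ∏ r ∈ (Ioo i N).erase k, (update b k x i - update b k x r) =
      ∏ i ∈ (range N).erase k, ∏ r ∈ (Ioo i N).erase k, (b i - b r) :=
    prod_congr rfl fun i hi => prod_congr rfl fun r hr => by
      rw [hne i hi, update_of_ne (mem_erase.mp hr).1]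
  rw [vandermondeProd_eq_mul_prod_erase hk, vandermondeProd_eq_mul_prod_erase hk, hrest,
    update_self, prod_congr rfl fun r hr => by rw [hne r hr]]
  ring

theorem vandermondeProd_ne_zero {F : Type*} [Field F] {N : ℕ} {b : ℕ → F}
    (hb : Set.InjOn b (range N)) : vandermondeProd N b ≠ 0 :=
  prod_ne_zero_iff.mpr fun i hi => prod_ne_zero_iff.mpr fun r hr =>
    sub_ne_zero.mpr fun h => (mem_Ioo.mp hr).1.ne
      (hb (by simpa using hi) (by simpa using (mem_Ioo.mp hr).2) h)

end Vandermonde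

/-! ### Adding and removing boxes -/

namespace YoungDiagram

variable {Y : YoungDiagram} {i N : ℕ}

theorem rowLen_le_card (Y : YoungDiagram) (i : ℕ) : Y.rowLen i ≤ #Y.cells := by
  rw [rowLen_eq_card]
  exact card_le_card (filter_subset _ _)

theorem colLen_le_card (Y : YoungDiagram) (j : ℕ) : Y.colLen j ≤ #Y.cells := by
  rw [colLen_eq_card]
  exact card_le_card (filter_subset _ _)

theorem lt_rowLen_iff_lt_colLen {j : ℕ} : j < Y.rowLen i ↔ i < Y.colLen j := by
  rw [← mem_iff_lt_rowLen, mem_iff_lt_colLen]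

theorem eq_of_rowLen_eq {Y Z : YoungDiagram} (h : Y.rowLen = Z.rowLen) : Y = Z :=
  SetLike.ext fun ⟨i, j⟩ => by rw [mem_iff_lt_rowLen, mem_iff_lt_rowLen, h]

theorem rowLen_eq_of_mem_iff {f : ℕ → ℕ} (h : ∀ i j, (i, j) ∈ Y ↔ j < f i) : Y.rowLen = f :=
  funext fun i => eq_of_forall_lt_iff fun j => by rw [← mem_iff_lt_rowLen, h]

theorem rowLen_eq_zero_of_le {r : ℕ} (hN : Y.rowLen N = 0) (hr : N ≤ r) : Y.rowLen r = 0 :=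
  Nat.eq_zero_of_le_zero (hN ▸ Y.rowLen_anti N r hr)

theorem rowLen_card_eq_zero (Y : YoungDiagram) : Y.rowLen #Y.cells = 0 := by
  by_contra h
  have := mem_iff_lt_colLen.mp (mem_iff_lt_rowLen.mpr (Nat.pos_of_ne_zero h))
  exact (this.trans_le (Y.colLen_le_card 0)).false

theorem colLen_le_of_rowLen_eq_zero (hN : Y.rowLen N = 0) (j : ℕ) : Y.colLen j ≤ N :=
  not_lt.mp fun h => by simpa [hN] using mem_iff_lt_rowLen.mp (mem_iff_lt_colLen.mpr h)

@[to_additive]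
theorem prod_cells_eq_prod_range {M : Type*} [CommMonoid M] (hN : Y.rowLen N = 0)
    (f : ℕ × ℕ → M) : ∏ c ∈ Y.cells, f c = ∏ i ∈ range N, ∏ j ∈ range (Y.rowLen i), f (i, j) :=
  prod_finset_product _ _ _ fun ⟨i, j⟩ => by
    simp only [mem_cells, mem_range, ← mem_iff_lt_rowLen, iff_and_self]
    exact fun hc => (mem_iff_lt_colLen.mp hc).trans_le (colLen_le_of_rowLen_eq_zero hN j)

theorem card_cells_eq_sum_rowLen (hN : Y.rowLen N = 0) : #Y.cells = ∑ i ∈ range N, Y.rowLen i := by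
  rw [card_eq_sum_ones, sum_cells_eq_sum_range hN]
  simp

theorem prod_cells_reflect {M : Type*} [CommMonoid M] (Y : YoungDiagram) (f : ℕ × ℕ → M) :
    ∏ c ∈ Y.cells, f (c.1, Y.rowLen c.1 - 1 - c.2) = ∏ c ∈ Y.cells, f c := by
  rw [prod_cells_eq_prod_range Y.rowLen_card_eq_zero,
    prod_cells_eq_prod_range Y.rowLen_card_eq_zero]
  exact prod_congr rfl fun i _ => prod_range_reflect (fun j => f (i, j)) _

theorem isLowerSet_of_mem_iff {s : Finset (ℕ × ℕ)} {f : ℕ → ℕ} (hf : Antitone f)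
    (h : ∀ i j, (i, j) ∈ s ↔ j < f i) : IsLowerSet (s : Set (ℕ × ℕ)) := by
  rintro ⟨i, j⟩ ⟨i', j'⟩ hle hmem
  rw [mem_coe, h] at hmem ⊢
  exact hle.2.trans_lt (hmem.trans_le (hf hle.1))

def Addable (Y : YoungDiagram) (i : ℕ) : Prop := ∀ r < i, Y.rowLen i < Y.rowLen r

def Removable (Y : YoungDiagram) (i : ℕ) : Prop := Y.rowLen (i + 1) < Y.rowLen i

instance : DecidablePred Y.Addable := fun _ => by unfold Addable; infer_instance

instance : DecidablePred Y.Removable := fun _ => by unfold Removable; infer_instance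

theorem Removable.rowLen_pos (h : Y.Removable i) : 0 < Y.rowLen i :=
  (Nat.zero_le _).trans_lt h

theorem Addable.antitone_update (h : Y.Addable i) :
    Antitone (update Y.rowLen i (Y.rowLen i + 1)) := by
  refine antitone_nat_of_succ_le fun r => ?_
  have := Y.rowLen_anti r (r + 1) r.le_succ
  simp only [update_apply]
  split_ifs with h₁ h₂ h₂ <;> subst_vars
  · omega
  · exact h r r.lt_succ_self
  · omega
  · exact this

theorem Removable.antitone_update (h : Y.Removable i) :
    Antitone (update Y.rowLen i (Y.rowLen i - 1)) := by
  refine antitone_nat_of_succ_le fun r => ?_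
  have := Y.rowLen_anti r (r + 1) r.le_succ
  simp only [update_apply]
  split_ifs with h₁ h₂ h₂ <;> subst_vars
  · omega
  · omega
  · exact Nat.le_sub_one_of_lt h
  · exact this

theorem mem_insert_iff_lt_update (Y : YoungDiagram) (i r j : ℕ) :
    (r, j) ∈ insert (i, Y.rowLen i) Y.cells ↔ j < update Y.rowLen i (Y.rowLen i + 1) r := by
  rcases eq_or_ne r i with rfl | hr
  · simp [mem_iff_lt_rowLen, le_iff_eq_or_lt]
  · simp [hr, mem_iff_lt_rowLen]

theorem mem_erase_iff_lt_update (h : 0 < Y.rowLen i) (r j : ℕ) :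
    (r, j) ∈ Y.cells.erase (i, Y.rowLen i - 1) ↔ j < update Y.rowLen i (Y.rowLen i - 1) r := by
  rcases eq_or_ne r i with rfl | hr
  · simp only [mem_erase, ne_eq, Prod.mk.injEq, true_and, mem_cells, mem_iff_lt_rowLen,
      update_self]
    omega
  · simp [hr, mem_iff_lt_rowLen]

noncomputable def addBox (Y : YoungDiagram) (i : ℕ) : YoungDiagram :=
  if h : Y.Addable i then
    ⟨insert (i, Y.rowLen i) Y.cells,
      isLowerSet_of_mem_iff h.antitone_update (Y.mem_insert_iff_lt_update i)⟩
  else Y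

noncomputable def removeBox (Y : YoungDiagram) (i : ℕ) : YoungDiagram :=
  if h : Y.Removable i then
    ⟨Y.cells.erase (i, Y.rowLen i - 1),
      isLowerSet_of_mem_iff h.antitone_update (mem_erase_iff_lt_update h.rowLen_pos)⟩
  else Y

theorem rowLen_addBox (h : Y.Addable i) :
    (Y.addBox i).rowLen = update Y.rowLen i (Y.rowLen i + 1) :=
  rowLen_eq_of_mem_iff fun r j => by rw [addBox, dif_pos h, mem_mk, mem_insert_iff_lt_update]

theorem rowLen_removeBox (h : Y.Removable i) :
    (Y.removeBox i).rowLen = update Y.rowLen i (Y.rowLen i - 1) :=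
  rowLen_eq_of_mem_iff fun r j => by
    rw [removeBox, dif_pos h, mem_mk, mem_erase_iff_lt_update h.rowLen_pos]

theorem card_addBox (h : Y.Addable i) : #(Y.addBox i).cells = #Y.cells + 1 := by
  rw [addBox, dif_pos h]
  exact card_insert_of_notMem fun hc => (mem_iff_lt_rowLen.mp hc).false

theorem card_removeBox (h : Y.Removable i) : #(Y.removeBox i).cells + 1 = #Y.cells := by
  rw [removeBox, dif_pos h]
  exact card_erase_add_one (mem_iff_lt_rowLen.mpr (Nat.sub_lt h.rowLen_pos one_pos))

theorem removable_addBox (h : Y.Addable i) : (Y.addBox i).Removable i := by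
  have := Y.rowLen_anti i (i + 1) i.le_succ
  simp only [Removable, rowLen_addBox h, update_self, update_of_ne (by omega : i + 1 ≠ i)]
  omega

theorem addable_removeBox (h : Y.Removable i) : (Y.removeBox i).Addable i := by
  intro r hr
  have := Y.rowLen_anti r i hr.le
  have := h.rowLen_pos
  simp only [rowLen_removeBox h, update_self, update_of_ne hr.ne]
  omega

theorem removeBox_addBox (h : Y.Addable i) : (Y.addBox i).removeBox i = Y :=
  eq_of_rowLen_eq <| by simp [rowLen_removeBox (removable_addBox h), rowLen_addBox h]

theorem addBox_removeBox (h : Y.Removable i) : (Y.removeBox i).addBox i = Y :=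
  eq_of_rowLen_eq <| by
    simp [rowLen_addBox (addable_removeBox h), rowLen_removeBox h, Nat.sub_add_cancel h.rowLen_pos]

theorem finite_setOf_card_cells_eq (n : ℕ) : {Y : YoungDiagram | #Y.cells = n}.Finite := by
  refine Set.Finite.of_finite_image (f := cells)
    ((range n ×ˢ range n).powerset.finite_toSet.subset ?_) fun Y _ Z _ h => YoungDiagram.ext h
  rintro _ ⟨Y, hY : #Y.cells = n, rfl⟩
  rw [mem_coe, mem_powerset]
  intro ⟨i, j⟩ hc
  have hi := (mem_iff_lt_colLen.mp (Y.up_left_mem le_rfl j.zero_le hc)).trans_le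
    (Y.colLen_le_card 0)
  have hj := (mem_iff_lt_rowLen.mp (Y.up_left_mem i.zero_le le_rfl hc)).trans_le
    (Y.rowLen_le_card 0)
  simp only [mem_product, mem_range]
  omega

noncomputable def diagramsOfCard (n : ℕ) : Finset YoungDiagram :=
  (finite_setOf_card_cells_eq n).toFinset

theorem mem_diagramsOfCard {n : ℕ} : Y ∈ diagramsOfCard n ↔ #Y.cells = n :=
  Set.Finite.mem_toFinset _

theorem diagramsOfCard_zero : diagramsOfCard 0 = {⊥} := by
  ext Y
  rw [mem_diagramsOfCard, mem_singleton, card_eq_zero, ← cells_bot, YoungDiagram.ext_iff]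

theorem rowLen_eq_zero_of_mem_diagramsOfCard {n : ℕ} (hY : Y ∈ diagramsOfCard n) (hN : n ≤ N) :
    Y.rowLen N = 0 :=
  rowLen_eq_zero_of_le Y.rowLen_card_eq_zero (mem_diagramsOfCard.mp hY ▸ hN)

theorem finsum_eq_sum_diagramsOfCard {M : Type*} [AddCommMonoid M] (n : ℕ)
    (g : YoungDiagram → M) :
    ∑ᶠ Y : {Y : YoungDiagram // #Y.cells = n}, g Y.1 = ∑ Y ∈ diagramsOfCard n, g Y :=
  (finsum_set_coe_eq_finsum_mem {Y : YoungDiagram | #Y.cells = n}).trans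
    (finsum_mem_eq_finite_toFinset_sum _ _)

/-! ### Hook lengths and beta numbers -/

/-- Only meaningful for cells of `Y` (truncated subtraction). -/
def hookLength (Y : YoungDiagram) (c : ℕ × ℕ) : ℕ := Y.rowLen c.1 - c.2 + Y.colLen c.2 - c.1 - 1

def hookProd (Y : YoungDiagram) : ℕ := ∏ c ∈ Y.cells, Y.hookLength c

theorem hookLength_pos {c : ℕ × ℕ} (hc : c ∈ Y) : 0 < Y.hookLength c := by
  have := mem_iff_lt_rowLen.mp hc
  have := mem_iff_lt_colLen.mp hc
  simp only [hookLength]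
  omega

theorem hookProd_pos (Y : YoungDiagram) : 0 < Y.hookProd :=
  prod_pos fun _ hc => hookLength_pos hc

noncomputable def beta (Y : YoungDiagram) (N r : ℕ) : ℚ := (Y.rowLen r : ℚ) + N - 1 - r

section RowHooks

variable (Y i N)

theorem injOn_hookLength_row :
    Set.InjOn (fun j => Y.hookLength (i, j)) (range (Y.rowLen i)) := by
  refine StrictAntiOn.injOn fun j _ j' hj' hjj' => ?_
  have hj'i : j' < Y.rowLen i := mem_range.mp hj'
  have := Y.colLen_anti j j' hjj'.le
  have := lt_rowLen_iff_lt_colLen.mp hj'i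
  simp only [hookLength]
  omega

theorem injOn_beta_gap :
    Set.InjOn (fun r => Y.rowLen i + r - i - Y.rowLen r) (Ioo i N) := by
  refine StrictMonoOn.injOn fun r hr r' _ hrr' => ?_
  have := (mem_Ioo.mp hr).1
  have := Y.rowLen_anti i r this.le
  have := Y.rowLen_anti r r' hrr'.le
  omega

theorem disjoint_hookLength_row_beta_gap :
    Disjoint ((range (Y.rowLen i)).image fun j => Y.hookLength (i, j))
      ((Ioo i N).image fun r => Y.rowLen i + r - i - Y.rowLen r) := by
  simp only [disjoint_left, mem_image, mem_range, mem_Ioo, not_exists, not_and]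
  rintro _ ⟨j, hj, rfl⟩ r ⟨hir, -⟩ heq
  have := lt_rowLen_iff_lt_colLen.mp hj
  have := Y.rowLen_anti i r hir.le
  simp only [hookLength] at heq
  rcases lt_or_ge j (Y.rowLen r) with hjr | hjr
  · have := lt_rowLen_iff_lt_colLen.mp hjr
    omega
  · have := mt lt_rowLen_iff_lt_colLen.mpr (not_lt.mpr hjr)
    omega

variable {Y i N}

/-- The hook lengths in row `i` together with the gaps `beta i - beta r` (`i < r < N`) are
exactly `1, …, beta i`. -/
theorem hookLength_row_union_beta_gap (hN : Y.rowLen N = 0) (hi : i < N) :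
    ((range (Y.rowLen i)).image fun j => Y.hookLength (i, j)) ∪
      ((Ioo i N).image fun r => Y.rowLen i + r - i - Y.rowLen r) =
        Ico 1 (Y.rowLen i + N - 1 - i + 1) := by
  refine eq_of_subset_of_card_le (fun x hx => ?_) ?_
  · simp only [mem_union, mem_image, mem_range, mem_Ioo, mem_Ico] at hx ⊢
    rcases hx with ⟨j, hj, rfl⟩ | ⟨r, ⟨hir, hrN⟩, rfl⟩
    · have := lt_rowLen_iff_lt_colLen.mp hj
      have := colLen_le_of_rowLen_eq_zero hN j
      simp only [hookLength]
      omega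
    · have := Y.rowLen_anti i r hir.le
      omega
  · rw [card_union_of_disjoint (disjoint_hookLength_row_beta_gap Y i N),
      card_image_of_injOn (injOn_hookLength_row Y i), card_image_of_injOn (injOn_beta_gap Y i N),
      card_range, Nat.card_Ioo, Nat.card_Ico]
    omega

end RowHooks

theorem hookProd_mul_prod_prod_Ioo (hN : Y.rowLen N = 0) :
    Y.hookProd * ∏ i ∈ range N, ∏ r ∈ Ioo i N, (Y.rowLen i + r - i - Y.rowLen r) =
      ∏ i ∈ range N, (Y.rowLen i + N - 1 - i)! := by
  rw [hookProd, prod_cells_eq_prod_range hN, ← prod_mul_distrib]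
  refine prod_congr rfl fun i hi => ?_
  rw [← prod_Ico_id_eq_factorial, ← hookLength_row_union_beta_gap hN (mem_range.mp hi),
    prod_union (disjoint_hookLength_row_beta_gap Y i N), prod_image (injOn_hookLength_row Y i),
    prod_image (injOn_beta_gap Y i N)]

theorem beta_sub_beta {r : ℕ} (hir : i < r) :
    Y.beta N i - Y.beta N r = ((Y.rowLen i + r - i - Y.rowLen r : ℕ) : ℚ) := by
  have := Y.rowLen_anti i r hir.le
  rw [Nat.sub_sub, Nat.cast_sub (by omega)]
  push_cast
  simp only [beta]
  ring

theorem cast_rowLen_add_sub (hi : i < N) : ((Y.rowLen i + N - 1 - i : ℕ) : ℚ) = Y.beta N i := by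
  rw [beta, Nat.cast_sub (by omega), Nat.cast_sub (by omega)]
  push_cast
  ring

theorem strictAnti_beta (Y : YoungDiagram) (N : ℕ) : StrictAnti (Y.beta N) := by
  intro r s hrs
  have : (Y.rowLen s : ℚ) ≤ Y.rowLen r := by exact_mod_cast Y.rowLen_anti r s hrs.le
  have : (r : ℚ) < s := by exact_mod_cast hrs
  simp only [beta]
  linarith

theorem beta_self_eq_zero (hN : Y.rowLen N = 0) : Y.beta (N + 1) N = 0 := by
  simp [beta, hN]

theorem two_mul_sum_beta (hN : Y.rowLen N = 0) :
    2 * ∑ r ∈ range N, Y.beta N r = 2 * #Y.cells + N * (N - 1) := by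
  have hgauss : ∀ M : ℕ, 2 * ∑ r ∈ range M, (r : ℚ) = M * (M - 1) := by
    intro M
    induction M with
    | zero => simp
    | succ M ih =>
      rw [sum_range_succ, mul_add, ih]
      push_cast
      ring
  simp only [beta, sum_sub_distrib, sum_add_distrib, sum_const, card_range, nsmul_eq_mul,
    card_cells_eq_sum_rowLen hN, Nat.cast_sum]
  linear_combination -hgauss N

theorem beta_addBox (h : Y.Addable i) (N : ℕ) :
    (Y.addBox i).beta N = update (Y.beta N) i (Y.beta N i + 1) := by
  funext r
  rcases eq_or_ne r i with rfl | hr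
  · simp only [beta, rowLen_addBox h, update_self]
    push_cast
    ring
  · simp only [beta, rowLen_addBox h, update_of_ne hr]

theorem hookProd_mul_vandermondeProd_beta (hN : Y.rowLen N = 0) :
    (Y.hookProd : ℚ) * vandermondeProd N (Y.beta N) =
      ∏ i ∈ range N, ((Y.rowLen i + N - 1 - i)! : ℚ) := by
  have := congrArg (Nat.cast : ℕ → ℚ) (hookProd_mul_prod_prod_Ioo hN)
  push_cast at this
  rw [← this, vandermondeProd]
  exact congrArg _ (prod_congr rfl fun i _ => prod_congr rfl fun r hr =>
    beta_sub_beta (mem_Ioo.mp hr).1)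

theorem hookProd_addBox_mul (h : Y.Addable i) (hi : i < N) (hN : Y.rowLen N = 0) :
    ((Y.addBox i).hookProd : ℚ) * ∏ r ∈ (range N).erase i, (Y.beta N i + 1 - Y.beta N r) =
      (Y.beta N i + 1) * Y.hookProd * ∏ r ∈ (range N).erase i, (Y.beta N i - Y.beta N r) := by
  have hY := hookProd_mul_vandermondeProd_beta hN
  have hμ := hookProd_mul_vandermondeProd_beta (Y := Y.addBox i) (N := N)
    (by rw [rowLen_addBox h, update_of_ne hi.ne', hN])
  have hV := vandermondeProd_update_mul hi (Y.beta N) (Y.beta N i + 1)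
  rw [← beta_addBox h] at hV
  have hfac : ∏ r ∈ range N, (((Y.addBox i).rowLen r + N - 1 - r)! : ℚ) =
      (Y.beta N i + 1) * ∏ r ∈ range N, ((Y.rowLen r + N - 1 - r)! : ℚ) := by
    rw [← mul_prod_erase _ _ (mem_range.mpr hi), ← mul_prod_erase _ _ (mem_range.mpr hi),
      prod_congr rfl fun r hr => by rw [rowLen_addBox h, update_of_ne (mem_erase.mp hr).1],
      rowLen_addBox h, update_self, show Y.rowLen i + 1 + N - 1 - i = Y.rowLen i + N - 1 - i + 1
        by omega, Nat.factorial_succ, Nat.cast_mul, Nat.cast_succ, cast_rowLen_add_sub hi]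
    ring
  -- Divide the Frobenius formulas for `Y.addBox i` and `Y`: the factorials gain the factor
  -- `beta i + 1`, and the Vandermonde products change as in `vandermondeProd_update_mul`.
  refine mul_left_cancel₀
    (vandermondeProd_ne_zero (N := N) (Y.strictAnti_beta N).injective.injOn) ?_
  linear_combination (-((Y.addBox i).hookProd : ℚ)) * hV +
    (∏ r ∈ (range N).erase i, (Y.beta N i - Y.beta N r)) * (hμ + hfac) -
    (Y.beta N i + 1) * (∏ r ∈ (range N).erase i, (Y.beta N i - Y.beta N r)) * hY

/-! ### The recursion -/

noncomputable def contentProd (x : ℚ) (Y : YoungDiagram) : ℚ := ∏ c ∈ Y.cells, (x + c.2 - c.1)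

/-- `s_Y(1^x) s_Y(1^y)` by the hook-content formula: the term of the Cauchy identity at `Y`. -/
noncomputable def cauchyWeight (x y : ℚ) (Y : YoungDiagram) : ℚ :=
  contentProd x Y * contentProd y Y / (Y.hookProd : ℚ) ^ 2

theorem contentProd_addBox (x : ℚ) (h : Y.Addable i) :
    contentProd x (Y.addBox i) = (x + Y.rowLen i - i) * contentProd x Y := by
  rw [contentProd, addBox, dif_pos h, prod_insert fun hc => (mem_iff_lt_rowLen.mp hc).false]
  rfl

theorem cauchyWeight_bot (x y : ℚ) : cauchyWeight x y ⊥ = 1 := by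
  simp [cauchyWeight, contentProd, hookProd]

theorem sum_removalWeight_beta (hN : Y.rowLen N = 0) :
    ∑ i ∈ range N, removalWeight N (Y.beta N) i = #Y.cells := by
  have := sum_removalWeight ((Y.strictAnti_beta N).injective.injOn (s := range N))
  rw [two_mul_sum_beta hN] at this
  linear_combination this / 2

theorem sum_additionWeight_beta (hN : Y.rowLen N = 0) (x y : ℚ) :
    ∑ i ∈ range (N + 1), additionWeight N x y (Y.beta (N + 1)) i = x * y + #Y.cells := by
  have := sum_additionWeight ((Y.strictAnti_beta (N + 1)).injective.injOn (s := range (N + 1)))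
    (beta_self_eq_zero hN) x y
  rw [two_mul_sum_beta (rowLen_eq_zero_of_le hN N.le_succ)] at this
  push_cast at this
  linear_combination this / 2

theorem removalWeight_beta_eq_zero (hN : Y.rowLen N = 0) (hi : i < N) (h : ¬Y.Removable i) :
    removalWeight N (Y.beta N) i = 0 := by
  have hrow : Y.rowLen (i + 1) = Y.rowLen i :=
    (Y.rowLen_anti i (i + 1) i.le_succ).antisymm (not_lt.mp h)
  rw [removalWeight, neg_mul, neg_eq_zero, mul_eq_zero, mul_eq_zero]
  left
  rcases (show i + 1 < N ∨ i + 1 = N by omega) with hi₁ | rfl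
  · right
    refine prod_eq_zero (mem_range.mpr hi₁) ?_
    simp only [beta, hrow]
    push_cast
    ring
  · left
    simp [beta, ← hrow, hN]

theorem additionWeight_beta_eq_zero (x y : ℚ) (hi : i < N + 1) (h : ¬Y.Addable i) :
    additionWeight N x y (Y.beta (N + 1)) i = 0 := by
  obtain ⟨r, hri, hr⟩ : ∃ r < i, Y.rowLen r ≤ Y.rowLen i := by simpa [Addable] using h
  obtain ⟨k, rfl⟩ : ∃ k, i = k + 1 := Nat.exists_eq_add_one.mpr (Nat.zero_lt_of_lt hri)
  have hrow : Y.rowLen k = Y.rowLen (k + 1) :=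
    ((Y.rowLen_anti r k (by omega)).trans hr).antisymm (Y.rowLen_anti k (k + 1) k.le_succ)
  rw [additionWeight, mul_eq_zero, mul_eq_zero]
  left
  right
  refine prod_eq_zero (mem_range.mpr (by omega : k < N)) ?_
  simp only [beta, hrow]
  push_cast
  ring

theorem cauchyWeight_addBox_mul_removalWeight (x y : ℚ) (h : Y.Addable i) (hi : i < N + 1)
    (hN : Y.rowLen N = 0) :
    cauchyWeight x y (Y.addBox i) * removalWeight (N + 1) ((Y.addBox i).beta (N + 1)) i =
      cauchyWeight x y Y * additionWeight N x y (Y.beta (N + 1)) i := by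
  have hratio := hookProd_addBox_mul h hi (rowLen_eq_zero_of_le hN N.le_succ)
  have hadd := additionWeight_mul_add_one (beta_self_eq_zero hN) hi x y
  set b := Y.beta (N + 1)
  set G₀ := ∏ r ∈ (range (N + 1)).erase i, (b i - b r)
  set G₁ := ∏ r ∈ (range (N + 1)).erase i, (b i + 1 - b r)
  have hG₀ : G₀ ≠ 0 := prod_ne_zero_iff.mpr fun r hr =>
    sub_ne_zero.mpr ((Y.strictAnti_beta _).injective.ne (mem_erase.mp hr).1.symm)
  have hG₁ : G₁ ≠ 0 := prod_ne_zero_iff.mpr fun r hr => by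
    have := ((Y.addBox i).strictAnti_beta (N + 1)).injective.ne (mem_erase.mp hr).1.symm
    rwa [beta_addBox h, update_self, update_of_ne (mem_erase.mp hr).1, ← sub_ne_zero] at this
  have hB : b i + 1 ≠ 0 := by
    have : (i : ℚ) < N + 1 := by exact_mod_cast hi
    have : (0 : ℚ) ≤ Y.rowLen i := Nat.cast_nonneg _
    simp only [b, beta]
    push_cast
    linarith
  have hY : (Y.hookProd : ℚ) ≠ 0 := Nat.cast_ne_zero.mpr Y.hookProd_pos.ne'
  have hcontent : ∀ z : ℚ, z + Y.rowLen i - i = z + b i - N := fun z => by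
    simp only [b, beta]
    push_cast
    ring
  have hremove : removalWeight (N + 1) ((Y.addBox i).beta (N + 1)) i = (b i + 1) * G₀ / G₁ := by
    rw [beta_addBox h, removalWeight_update_self _ hi]
    exact congrArg (· / _) (congrArg _ (prod_congr rfl fun r _ => by ring))
  rw [cauchyWeight, cauchyWeight, contentProd_addBox x h, contentProd_addBox y h, hcontent,
    hcontent, hremove, eq_div_of_mul_eq hB hadd, eq_div_of_mul_eq hG₁ hratio]
  field_simp

theorem sum_cauchyWeight_mul_removalWeight (x y : ℚ) {n i : ℕ} (hi : i < n + 2) :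
    ∑ μ ∈ diagramsOfCard (n + 1), cauchyWeight x y μ * removalWeight (n + 2) (μ.beta (n + 2)) i =
      ∑ Y ∈ diagramsOfCard n,
        cauchyWeight x y Y * additionWeight (n + 1) x y (Y.beta (n + 2)) i := by
  have hμ : ∀ μ ∈ diagramsOfCard (n + 1),
      cauchyWeight x y μ * removalWeight (n + 2) (μ.beta (n + 2)) i ≠ 0 → μ.Removable i :=
    fun μ hμ hne => by_contra fun h => hne <| by
      rw [removalWeight_beta_eq_zero (rowLen_eq_zero_of_mem_diagramsOfCard hμ (by omega)) hi h,
        mul_zero]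
  have hY : ∀ Y ∈ diagramsOfCard n,
      cauchyWeight x y Y * additionWeight (n + 1) x y (Y.beta (n + 2)) i ≠ 0 → Y.Addable i :=
    fun Y _ hne => by_contra fun h => hne <| by rw [additionWeight_beta_eq_zero x y hi h, mul_zero]
  -- Only removable (resp. addable) rows contribute, and between those `addBox` and `removeBox`
  -- are inverse bijections.
  rw [← sum_filter_of_ne hμ, ← sum_filter_of_ne hY]
  refine (sum_nbij' (·.addBox i) (·.removeBox i) (fun Y hY => ?_) (fun μ hμ => ?_)
    (fun Y hY => removeBox_addBox (mem_filter.mp hY).2)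
    (fun μ hμ => addBox_removeBox (mem_filter.mp hμ).2) (fun Y hY => ?_)).symm
  · obtain ⟨hY, h⟩ := mem_filter.mp hY
    exact mem_filter.mpr ⟨mem_diagramsOfCard.mpr (by rw [card_addBox h, mem_diagramsOfCard.mp hY]),
      removable_addBox h⟩
  · obtain ⟨hμ, h⟩ := mem_filter.mp hμ
    refine mem_filter.mpr ⟨mem_diagramsOfCard.mpr ?_, addable_removeBox h⟩
    have := card_removeBox h
    rw [mem_diagramsOfCard.mp hμ] at this
    omega
  · obtain ⟨hY, h⟩ := mem_filter.mp hY
    exact (cauchyWeight_addBox_mul_removalWeight x y h hi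
      (rowLen_eq_zero_of_mem_diagramsOfCard hY (by omega))).symm

theorem succ_mul_sum_cauchyWeight (x y : ℚ) (n : ℕ) :
    (n + 1) * ∑ μ ∈ diagramsOfCard (n + 1), cauchyWeight x y μ =
      (x * y + n) * ∑ Y ∈ diagramsOfCard n, cauchyWeight x y Y :=
  calc (n + 1) * ∑ μ ∈ diagramsOfCard (n + 1), cauchyWeight x y μ
      = ∑ μ ∈ diagramsOfCard (n + 1),
          cauchyWeight x y μ * ∑ i ∈ range (n + 2), removalWeight (n + 2) (μ.beta (n + 2)) i := by
        rw [mul_sum]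
        refine sum_congr rfl fun μ hμ => ?_
        rw [sum_removalWeight_beta (rowLen_eq_zero_of_mem_diagramsOfCard hμ (by omega)),
          mem_diagramsOfCard.mp hμ]
        push_cast
        ring
    _ = ∑ i ∈ range (n + 2), ∑ Y ∈ diagramsOfCard n,
          cauchyWeight x y Y * additionWeight (n + 1) x y (Y.beta (n + 2)) i := by
        simp only [mul_sum]
        rw [sum_comm]
        exact sum_congr rfl fun i hi => sum_cauchyWeight_mul_removalWeight x y (mem_range.mp hi)
    _ = (x * y + n) * ∑ Y ∈ diagramsOfCard n, cauchyWeight x y Y := by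
        rw [sum_comm, mul_sum]
        refine sum_congr rfl fun Y hY => ?_
        rw [← mul_sum, sum_additionWeight_beta (N := n + 1)
          (rowLen_eq_zero_of_mem_diagramsOfCard hY n.le_succ), mem_diagramsOfCard.mp hY]
        ring

theorem sum_cauchyWeight (x y : ℚ) (n : ℕ) :
    ∑ Y ∈ diagramsOfCard n, cauchyWeight x y Y = (ascPochhammer ℚ n).eval (x * y) / n ! := by
  induction n with
  | zero => simp [diagramsOfCard_zero, cauchyWeight_bot]
  | succ n ih =>
    have hstep := succ_mul_sum_cauchyWeight x y n
    rw [ih, ← mul_div_assoc, eq_div_iff (by positivity)] at hstep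
    rw [ascPochhammer_succ_right, eval_mul, eval_add, eval_X, eval_natCast, Nat.factorial_succ,
      Nat.cast_mul, Nat.cast_succ, eq_div_iff (by positivity)]
    linear_combination hstep

/-! ### The Nekrasov factors -/

theorem colLen_bot (j : ℕ) : (⊥ : YoungDiagram).colLen j = 0 := by
  simp [colLen_eq_card, col]

theorem one_add_armQ_add_legQ_bot {Y : YoungDiagram} {c : ℕ × ℕ} (hc : c ∈ Y) :
    1 + armQ Y c + legQ ⊥ c = ((Y.rowLen c.1 - 1 - c.2 : ℕ) : ℚ) - c.1 := by
  have := mem_iff_lt_rowLen.mp hc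
  rw [armQ, legQ, colLen_bot, Nat.sub_sub, Nat.cast_sub (by omega)]
  push_cast
  ring

theorem cast_hookLength {Y : YoungDiagram} {c : ℕ × ℕ} (hc : c ∈ Y) :
    (Y.hookLength c : ℚ) = 1 + armQ Y c + legQ Y c := by
  have := mem_iff_lt_rowLen.mp hc
  have := mem_iff_lt_colLen.mp hc
  rw [hookLength, armQ, legQ, Nat.sub_sub, Nat.cast_sub (by omega), Nat.cast_add,
    Nat.cast_sub (by omega)]
  push_cast
  ring

end YoungDiagram

theorem Zb_bot_left (ν : ℚ) (Y : YoungDiagram) : Zb ν ⊥ Y = Y.contentProd ν := by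
  -- Reflecting each row, `j ↦ rowLen i - 1 - j`, turns the arm lengths into contents.
  rw [Zb, YoungDiagram.cells_bot, prod_empty, mul_one, YoungDiagram.contentProd,
    ← Y.prod_cells_reflect fun c => ν + c.2 - c.1]
  exact prod_congr rfl fun c hc => by
    rw [YoungDiagram.one_add_armQ_add_legQ_bot hc]
    ring

theorem Zb_bot_right (ν : ℚ) (Y : YoungDiagram) : Zb ν Y ⊥ = Y.contentProd (-ν) := by
  rw [Zb, YoungDiagram.cells_bot, prod_empty, one_mul, YoungDiagram.contentProd,
    ← Y.prod_cells_reflect fun c => -ν + c.2 - c.1]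
  exact prod_congr rfl fun c hc => by
    rw [YoungDiagram.one_add_armQ_add_legQ_bot hc]
    ring

theorem Z0_eq_hookProd_sq (Y : YoungDiagram) : Z0 Y = (Y.hookProd : ℚ) ^ 2 := by
  rw [Z0, Zb, YoungDiagram.hookProd, Nat.cast_prod, sq]
  congr 1 <;> exact prod_congr rfl fun c hc => by
    rw [YoungDiagram.cast_hookLength hc]
    ring

theorem Zb_bot_mul_Zb_bot_div_Z0 (α₁ α₂ : ℚ) (Y : YoungDiagram) :
    Zb α₁ ⊥ Y * Zb α₂ Y ⊥ / Z0 Y = Y.cauchyWeight α₁ (-α₂) := by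
  rw [Zb_bot_left, Zb_bot_right, Z0_eq_hookProd_sq, YoungDiagram.cauchyWeight]

/-- The sum rule coefficientwise: `(-α₁α₂)_n / n!` is the coefficient of `t^n` in
`(1-t)^{α₁α₂}`. -/
theorem u1_sum_rule (α₁ α₂ : ℚ) (n : ℕ) :
    (∑ᶠ Y : {Y : YoungDiagram // Y.cells.card = n},
        Zb α₁ ⊥ Y.1 * Zb α₂ Y.1 ⊥ / Z0 Y.1)
      = (ascPochhammer ℚ n).eval (-(α₁ * α₂)) / (Nat.factorial n : ℚ) := by
  simp only [Zb_bot_mul_Zb_bot_div_Z0]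
  rw [YoungDiagram.finsum_eq_sum_diagramsOfCard n (·.cauchyWeight α₁ (-α₂)),
    YoungDiagram.sum_cauchyWeight, mul_neg]
end

section
/- Bilinear commutation for the charge-shift-invariant operator: let $\mathcal O$ be an invertible operator on the fermionic Fock space whose adjoint action on fermion modes is linear, $\mathcal O^{-1}\psi_r\mathcal O=\sum_s R_{rs}\psi_s$ and $\mathcal O^{-1}\tilde\psi_{-r}\mathcal O=\sum_s\tilde\psi_{-s}(R^{-1})_{sr}$ (with $R$ row/column finite so all sums are finite on each vector). Then $(\mathcal O\otimes\mathcal O)\circ\Omega = \Omega\circ(\mathcal O\otimes\mathcal O)$ on $\mathcal H\otimes\mathcal H$, where $\Omega=\sum_{r}\psi_{-r}\otimes\tilde\psi_{r}$ (the Casimir/Hirota operator). -/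
/-!
Write `φ u := ψ̃_{-u-1}`, so that `{ψ_k, φ_l} = δ_{kl}` and `Ω = ∑ᶠ u, ψ_u ⊗ φ_u`. On a pure
tensor, `(O⁻¹ ⊗ O⁻¹) Ω (O e ⊗ O f) = ∑_u (∑_a R_{ua} ψ_a e) ⊗ (∑_b R⁻¹_{bu} φ_b f)`, and
exchanging the sum over `u` with the sum over `(a, b)` produces the coefficients
`∑_u R⁻¹_{bu} R_{ua} = δ_{ba}`, which collapse the sum to `Ω (e ⊗ f)`.

The exchange is legitimate because only finitely many triples `(u, a, b)` contribute. Suppose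
`R_{ua} ≠ 0` and `ψ_a e ≠ 0` but `ψ_u (O e) = 0`. If moreover `φ_a e = 0`, applying `φ_a` to
`0 = O⁻¹ ψ_u O e = ∑_l R_{ul} ψ_l e` gives `R_{ua} e = 0`, which is absurd. Hence either `u` lies
in the finite support of `Ω (O e ⊗ O f)`, or `a` lies in the finite support of `Ω (e ⊗ e)` and
`u` in the finite column of `R` at `a`; symmetrically for `b`, `f` and `R⁻¹`.
-/

open TensorProduct Function

theorem TensorProduct.tmul_ne_zero {K M N : Type*} [Field K] [AddCommGroup M] [Module K M]
    [AddCommGroup N] [Module K N] {x : M} {y : N} (hx : x ≠ 0) (hy : y ≠ 0) :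
    x ⊗ₜ[K] y ≠ 0 := by
  obtain ⟨f, hf⟩ : ∃ f : Module.Dual K M, f x ≠ 0 := by
    by_contra! h
    exact hx ((Module.forall_dual_apply_eq_zero_iff K x).mp h)
  obtain ⟨g, hg⟩ : ∃ g : Module.Dual K N, g y ≠ 0 := by
    by_contra! h
    exact hy ((Module.forall_dual_apply_eq_zero_iff K y).mp h)
  intro h
  have : TensorProduct.lid K K (map f g (x ⊗ₜ y)) = f x * g y := by simp
  rw [h, map_zero, map_zero] at this
  exact mul_ne_zero hf hg this.symm

theorem finsum_tmul_finsum {R M N α β : Type*} [CommSemiring R] [AddCommMonoid M] [Module R M]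
    [AddCommMonoid N] [Module R N] {x : α → M} {y : β → N} (hx : (support x).Finite)
    (hy : (support y).Finite) :
    (∑ᶠ a, x a) ⊗ₜ[R] (∑ᶠ b, y b) = ∑ᶠ p : α × β, x p.1 ⊗ₜ[R] y p.2 := by
  have hxy :
      (support fun p : α × β => x p.1 ⊗ₜ[R] y p.2) ⊆ ↑(hx.toFinset ×ˢ hy.toFinset) := by
    intro p hp
    simp only [Finset.coe_product, Set.Finite.coe_toFinset, Set.mem_prod, mem_support]
    constructor <;> rintro h <;> simp [h] at hp
  rw [finsum_eq_sum_of_support_subset x hx.coe_toFinset.ge,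
    finsum_eq_sum_of_support_subset y hy.coe_toFinset.ge,
    finsum_eq_sum_of_support_subset _ hxy, Finset.sum_product, TensorProduct.sum_tmul]
  simp only [TensorProduct.tmul_sum]

section Finsum

variable {α β M : Type*} [AddCommMonoid M]

theorem finsum_comm_of_finite_support {f : α → β → M} (hf : (support (uncurry f)).Finite) :
    ∑ᶠ a, ∑ᶠ b, f a b = ∑ᶠ b, ∑ᶠ a, f a b := by
  have hswap : (support (uncurry f ∘ Prod.swap)).Finite := by
    rw [support_comp_eq_preimage]
    exact hf.preimage Prod.swap_injective.injOn
  calc ∑ᶠ a, ∑ᶠ b, f a b = ∑ᶠ p : α × β, uncurry f p := (finsum_curry _ hf).symm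
    _ = ∑ᶠ p : β × α, uncurry f p.swap := (finsum_comp_equiv (Equiv.prodComm β α)).symm
    _ = ∑ᶠ b, ∑ᶠ a, f a b := finsum_curry _ hswap

theorem finsum_prod_ite_eq [DecidableEq α] (g : α → M) :
    ∑ᶠ p : α × α, (if p.1 = p.2 then g p.1 else 0) = ∑ᶠ a, g a := by
  have hdiag : Injective fun a : α => (a, a) := fun a b h => congrArg Prod.fst h
  rw [← finsum_mem_range (f := fun p : α × α => g p.1) hdiag, finsum_mem_def]
  refine finsum_congr fun p => ?_
  by_cases h : p.1 = p.2
  · have hp : p ∈ Set.range fun a : α => (a, a) := ⟨p.1, Prod.ext rfl h⟩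
    rw [if_pos h, Set.indicator_of_mem hp]
  · rw [if_neg h, Set.indicator_of_notMem]
    rintro ⟨a, rfl⟩
    exact h rfl

theorem Int.finsum_comp_neg_sub_one (f : ℤ → M) : ∑ᶠ k, f (-k - 1) = ∑ᶠ k, f k :=
  finsum_comp_equiv ((Equiv.neg ℤ).trans (Equiv.subRight 1))

theorem Int.finite_support_of_comp_neg_sub_one {f : ℤ → M}
    (hf : (support fun k => f (-k - 1)).Finite) : (support f).Finite :=
  (hf.image fun k => -k - 1).subset fun k hk => ⟨-k - 1, by simpa using hk, by ring⟩

end Finsum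

noncomputable def locallyFiniteSum {R V W ι : Type*} [Semiring R] [AddCommMonoid V] [Module R V]
    [AddCommMonoid W] [Module R W] (T : ι → V →ₗ[R] W)
    (hT : ∀ x, (support fun i => T i x).Finite) : V →ₗ[R] W where
  toFun x := ∑ᶠ i, T i x
  map_add' x y := by simp only [map_add]; exact finsum_add_distrib (hT x) (hT y)
  map_smul' c x := by simp only [map_smul, RingHom.id_apply]; exact (smul_finsum' c (hT x)).symm

theorem Module.End.apply_finsum_smul_of_anticomm {R M ι : Type*} [Semiring R]
    [AddCommMonoid M] [Module R M] [DecidableEq ι]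
    {A : Module.End R M} {B : ι → Module.End R M} {a : ι}
    (hAB : ∀ l, A * B l + B l * A = if l = a then 1 else 0) {e : M} (he : A e = 0)
    {c : ι → R} (hc : (Function.support c).Finite) : A (∑ᶠ l, c l • B l e) = c a • e := by
  have hABe : ∀ l, A (B l e) = if l = a then e else 0 := fun l => by
    simpa [he, apply_ite (fun T : Module.End R M => T e)] using congrArg (· e) (hAB l)
  have hsupp : (Function.support fun l => c l • B l e).Finite :=
    hc.subset (support_smul_subset_left c fun l => B l e)
  rw [map_finsum A hsupp, finsum_eq_single _ a]
  · simp [hABe]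
  · intro l hl
    simp [hABe, hl]

theorem Module.End.finsum_smul_ne_zero_or_apply_ne_zero {K M ι : Type*} [DivisionRing K]
    [AddCommGroup M] [Module K M] [DecidableEq ι]
    {A : Module.End K M} {B : ι → Module.End K M} {a : ι}
    (hAB : ∀ l, A * B l + B l * A = if l = a then 1 else 0) {c : ι → K}
    (hc : (Function.support c).Finite) (hca : c a ≠ 0) {e : M} (hBe : B a e ≠ 0) :
    ∑ᶠ l, c l • B l e ≠ 0 ∨ A e ≠ 0 := by
  by_contra! h
  have hca_e := apply_finsum_smul_of_anticomm hAB h.2 hc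
  rw [h.1, map_zero, eq_comm, smul_eq_zero] at hca_e
  have he : e ≠ 0 := by
    rintro rfl
    exact hBe (map_zero _)
  exact hca_e.elim hca he

section ChangeOfBasis

variable {K H ι : Type*} [Field K] [AddCommGroup H] [Module K H] [DecidableEq ι]
  {ψ φ : ι → Module.End K H} {R Rinv : ι → ι → K} {e f : H} {x y : ι → H}

theorem finite_support_expansion_terms
    (hanti : ∀ k l, ψ k * φ l + φ l * ψ k = if k = l then 1 else 0)
    (hRrow : ∀ k, (support fun l => R k l).Finite)
    (hRcol : ∀ l, (support fun k => R k l).Finite)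
    (hRinvRow : ∀ k, (support fun l => Rinv k l).Finite)
    (hRinvCol : ∀ l, (support fun k => Rinv k l).Finite)
    (hx : ∀ u, x u = ∑ᶠ l, R u l • ψ l e) (hy : ∀ u, y u = ∑ᶠ l, Rinv l u • φ l f)
    (hxy : (support fun u => x u ⊗ₜ[K] y u).Finite)
    (hee : (support fun i => ψ i e ⊗ₜ[K] φ i e).Finite)
    (hff : (support fun i => ψ i f ⊗ₜ[K] φ i f).Finite) :
    (support fun q : ι × ι × ι =>
      (R q.1 q.2.1 * Rinv q.2.2 q.1) • (ψ q.2.1 e ⊗ₜ[K] φ q.2.2 f)).Finite := by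
  set U : Set ι := (support fun u => x u ⊗ₜ[K] y u) ∪
    (⋃ a ∈ support (fun i => ψ i e ⊗ₜ[K] φ i e), support fun u => R u a) ∪
    ⋃ b ∈ support (fun i => ψ i f ⊗ₜ[K] φ i f), support fun u => Rinv b u
  have hU : U.Finite :=
    (hxy.union (hee.biUnion fun a _ => hRcol a)).union (hff.biUnion fun b _ => hRinvRow b)
  refine (hU.prod ((hU.biUnion fun u _ => hRrow u).prod
    (hU.biUnion fun u _ => hRinvCol u))).subset ?_
  rintro ⟨u, a, b⟩ hq
  simp only [mem_support, smul_ne_zero_iff, mul_ne_zero_iff, ne_eq] at hq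
  obtain ⟨⟨hRua, hRbu⟩, hT⟩ := hq
  have hψa : ψ a e ≠ 0 := fun h => hT (by rw [h, zero_tmul])
  have hφb : φ b f ≠ 0 := fun h => hT (by rw [h, tmul_zero])
  have hu : u ∈ U := by
    rcases Module.End.finsum_smul_ne_zero_or_apply_ne_zero
      (fun l => (add_comm _ _).trans (hanti l a)) (hRrow u) hRua hψa with hxu | hφa
    · rcases Module.End.finsum_smul_ne_zero_or_apply_ne_zero (A := ψ b) (B := φ)
        (c := fun l => Rinv l u) (fun l => (hanti b l).trans (by simp only [eq_comm]))
        (hRinvCol u) hRbu hφb with hyu | hψb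
      · exact Or.inl (Or.inl (tmul_ne_zero (hx u ▸ hxu) (hy u ▸ hyu)))
      · exact Or.inr (Set.mem_biUnion (tmul_ne_zero hψb hφb) hRbu)
    · exact Or.inl (Or.inr (Set.mem_biUnion (tmul_ne_zero hψa hφa) hRua))
  exact ⟨hu, Set.mem_biUnion hu hRua, Set.mem_biUnion hu hRbu⟩

theorem finsum_tmul_eq_of_expansion
    (hanti : ∀ k l, ψ k * φ l + φ l * ψ k = if k = l then 1 else 0)
    (hRrow : ∀ k, (support fun l => R k l).Finite)
    (hRcol : ∀ l, (support fun k => R k l).Finite)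
    (hRinvRow : ∀ k, (support fun l => Rinv k l).Finite)
    (hRinvCol : ∀ l, (support fun k => Rinv k l).Finite)
    (hinv' : ∀ k l, (∑ᶠ u, Rinv k u * R u l) = if k = l then 1 else 0)
    (hx : ∀ u, x u = ∑ᶠ l, R u l • ψ l e) (hy : ∀ u, y u = ∑ᶠ l, Rinv l u • φ l f)
    (hxy : (support fun u => x u ⊗ₜ[K] y u).Finite)
    (hee : (support fun i => ψ i e ⊗ₜ[K] φ i e).Finite)
    (hff : (support fun i => ψ i f ⊗ₜ[K] φ i f).Finite) :
    ∑ᶠ u, x u ⊗ₜ[K] y u = ∑ᶠ a, ψ a e ⊗ₜ[K] φ a f := by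
  set F : ι → ι × ι → H ⊗[K] H := fun u p => (R u p.1 * Rinv p.2 u) • (ψ p.1 e ⊗ₜ φ p.2 f)
  have hrow : ∀ u, x u ⊗ₜ[K] y u = ∑ᶠ p, F u p := fun u => by
    rw [hx u, hy u, finsum_tmul_finsum (x := fun l => R u l • ψ l e)
      (y := fun l => Rinv l u • φ l f) ((hRrow u).subset (support_smul_subset_left _ _))
      ((hRinvCol u).subset (support_smul_subset_left _ _))]
    exact finsum_congr fun p => smul_tmul_smul _ _ _ _
  have hcol : ∀ p : ι × ι, ∑ᶠ u, F u p = if p.1 = p.2 then ψ p.1 e ⊗ₜ φ p.1 f else 0 := by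
    rintro ⟨a, b⟩
    simp only [F, ← finsum_smul, mul_comm (R _ a), hinv' b a]
    rcases eq_or_ne a b with rfl | hab
    · simp
    · simp [hab, hab.symm]
  calc ∑ᶠ u, x u ⊗ₜ[K] y u = ∑ᶠ u, ∑ᶠ p, F u p := finsum_congr hrow
    _ = ∑ᶠ p, ∑ᶠ u, F u p := finsum_comm_of_finite_support
        (finite_support_expansion_terms hanti hRrow hRcol hRinvRow hRinvCol hx hy hxy hee hff)
    _ = ∑ᶠ p : ι × ι, if p.1 = p.2 then ψ p.1 e ⊗ₜ φ p.1 f else 0 := finsum_congr hcol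
    _ = ∑ᶠ a, ψ a e ⊗ₜ[K] φ a f := finsum_prod_ite_eq fun a => ψ a e ⊗ₜ[K] φ a f

theorem map_finsum_tmul_eq_finsum_tmul_apply
    (hanti : ∀ k l, ψ k * φ l + φ l * ψ k = if k = l then 1 else 0)
    (hRrow : ∀ k, (support fun l => R k l).Finite)
    (hRcol : ∀ l, (support fun k => R k l).Finite)
    (hRinvRow : ∀ k, (support fun l => Rinv k l).Finite)
    (hRinvCol : ∀ l, (support fun k => Rinv k l).Finite)
    (hinv' : ∀ k l, (∑ᶠ u, Rinv k u * R u l) = if k = l then 1 else 0)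
    (O : H ≃ₗ[K] H) (hconj : ∀ k v, O.symm (ψ k (O v)) = ∑ᶠ l, R k l • ψ l v)
    (hconjt : ∀ k v, O.symm (φ k (O v)) = ∑ᶠ l, Rinv l k • φ l v)
    (hfin : ∀ z, (support fun i => map (ψ i) (φ i) z).Finite) (e f : H) :
    map O.toLinearMap O.toLinearMap (∑ᶠ i, ψ i e ⊗ₜ[K] φ i f)
      = ∑ᶠ i, ψ i (O e) ⊗ₜ[K] φ i (O f) := by
  have hpair : ∀ v w, (support fun i => ψ i v ⊗ₜ[K] φ i w).Finite := fun v w => by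
    simpa only [map_tmul] using hfin (v ⊗ₜ w)
  have hsymm : (support fun u => O.symm (ψ u (O e)) ⊗ₜ[K] O.symm (φ u (O f))).Finite := by
    refine (hpair (O e) (O f)).subset fun u hu h0 => hu ?_
    simpa using congrArg (map O.symm.toLinearMap O.symm.toLinearMap) h0
  rw [← finsum_tmul_eq_of_expansion hanti hRrow hRcol hRinvRow hRinvCol hinv' (hconj · e)
    (hconjt · f) hsymm (hpair e e) (hpair f f), map_finsum _ hsymm]
  simp

theorem map_comp_locallyFiniteSum
    (hanti : ∀ k l, ψ k * φ l + φ l * ψ k = if k = l then 1 else 0)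
    (hRrow : ∀ k, (support fun l => R k l).Finite)
    (hRcol : ∀ l, (support fun k => R k l).Finite)
    (hRinvRow : ∀ k, (support fun l => Rinv k l).Finite)
    (hRinvCol : ∀ l, (support fun k => Rinv k l).Finite)
    (hinv' : ∀ k l, (∑ᶠ u, Rinv k u * R u l) = if k = l then 1 else 0)
    (O : H ≃ₗ[K] H) (hconj : ∀ k v, O.symm (ψ k (O v)) = ∑ᶠ l, R k l • ψ l v)
    (hconjt : ∀ k v, O.symm (φ k (O v)) = ∑ᶠ l, Rinv l k • φ l v)
    (hfin : ∀ z, (support fun i => map (ψ i) (φ i) z).Finite) :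
    map O.toLinearMap O.toLinearMap ∘ₗ locallyFiniteSum (fun i => map (ψ i) (φ i)) hfin
      = locallyFiniteSum (fun i => map (ψ i) (φ i)) hfin ∘ₗ map O.toLinearMap O.toLinearMap :=
  TensorProduct.ext' fun e f => by
    simpa [locallyFiniteSum] using map_finsum_tmul_eq_finsum_tmul_apply hanti hRrow hRcol
      hRinvRow hRinvCol hinv' O hconj hconjt hfin e f

end ChangeOfBasis

-- `ψ k` and `ψt k` are the modes `ψ_{k+1/2}` and `ψ̃_{k+1/2}`.
theorem hirota_bilinear_commutation_general {H : Type*} [AddCommGroup H] [Module ℂ H]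
    (ψ ψt : ℤ → Module.End ℂ H) (O : H ≃ₗ[ℂ] H) (R Rinv : ℤ → ℤ → ℂ)
    (hanti : ∀ k l : ℤ, ψ k * ψt l + ψt l * ψ k
      = if k + l + 1 = 0 then (1 : Module.End ℂ H) else 0)
    (hRrow : ∀ k : ℤ, (Function.support fun l => R k l).Finite)
    (hRcol : ∀ l : ℤ, (Function.support fun k => R k l).Finite)
    (hRinvRow : ∀ k : ℤ, (Function.support fun l => Rinv k l).Finite)
    (hRinvCol : ∀ l : ℤ, (Function.support fun k => Rinv k l).Finite)
    (hinv' : ∀ k l : ℤ, (∑ᶠ u : ℤ, Rinv k u * R u l) = if k = l then 1 else 0)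
    (hconj : ∀ (k : ℤ) (x : H), O.symm (ψ k (O x)) = ∑ᶠ l : ℤ, R k l • ψ l x)
    (hconjt : ∀ (k : ℤ) (x : H),
      O.symm (ψt (-k - 1) (O x)) = ∑ᶠ l : ℤ, Rinv l k • ψt (-l - 1) x)
    (hfin : ∀ x : H ⊗[ℂ] H,
      (Function.support fun k : ℤ =>
        TensorProduct.map (ψ (-k - 1) : H →ₗ[ℂ] H) (ψt k : H →ₗ[ℂ] H) x).Finite) :
    ∀ x : H ⊗[ℂ] H,
      TensorProduct.map O.toLinearMap O.toLinearMap
          (∑ᶠ k : ℤ, TensorProduct.map (ψ (-k - 1) : H →ₗ[ℂ] H) (ψt k : H →ₗ[ℂ] H) x)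
        = ∑ᶠ k : ℤ, TensorProduct.map (ψ (-k - 1) : H →ₗ[ℂ] H) (ψt k : H →ₗ[ℂ] H)
            (TensorProduct.map O.toLinearMap O.toLinearMap x) := by
  set φ : ℤ → Module.End ℂ H := fun k => ψt (-k - 1)
  have hanti' : ∀ k l, ψ k * φ l + φ l * ψ k = if k = l then 1 else 0 := fun k l => by
    simp only [φ, hanti, show k + (-l - 1) + 1 = 0 ↔ k = l by omega]
  have hterm : ∀ k, map (ψ (-k - 1)) (ψt k) = map (ψ (-k - 1)) (φ (-k - 1)) := fun k => by
    simp only [φ, show -(-k - 1) - 1 = k by ring]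
  have hfin' : ∀ z, (support fun i => map (ψ i) (φ i) z).Finite := fun z =>
    Int.finite_support_of_comp_neg_sub_one (by simpa only [hterm] using hfin z)
  have hreindex : ∀ z, ∑ᶠ k, map (ψ (-k - 1)) (ψt k) z
      = locallyFiniteSum (fun i => map (ψ i) (φ i)) hfin' z := fun z =>
    (finsum_congr fun k => by rw [hterm]).trans
      (Int.finsum_comp_neg_sub_one fun i => map (ψ i) (φ i) z)
  intro z
  rw [hreindex, hreindex]
  exact LinearMap.congr_fun (map_comp_locallyFiniteSum hanti' hRrow hRcol hRinvRow hRinvCol hinv'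
    O hconj hconjt hfin') z

/-- Bilinear (Hirota) commutation for a `GL(∞)`-type operator.  The free fermion modes
`ψ_r, ψ̃_r` (`r ∈ ℤ + 1/2`) are encoded as `ψ k, ψt k` (`k ∈ ℤ`, `r = k + 1/2`) acting on
the Fock space `H`; they satisfy `{ψ_r, ψ̃_s} = δ_{r+s,0}` and the other anticommutators
vanish.  Let `O` be an invertible operator whose adjoint action on the fermion modes is
linear: `O⁻¹ ψ_r O = ∑_s R_{rs} ψ_s`, `O⁻¹ ψ̃_{-r} O = ∑_s ψ̃_{-s} (R⁻¹)_{sr}`, with `R`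
row- and column-finite and `R⁻¹` a two-sided inverse.  Then the Casimir/Hirota operator
`Ω = ∑_{r∈ℤ+1/2} ψ_{-r} ⊗ ψ̃_r` (acting pointwise by the finite sum
`Ω x = ∑ᶠ k, (ψ(-k-1) ⊗ ψ̃(k)) x`) commutes with `O ⊗ O`. -/
theorem hirota_bilinear_commutation {H : Type*} [AddCommGroup H] [Module ℂ H]
    (ψ ψt : ℤ → Module.End ℂ H) (O : H ≃ₗ[ℂ] H) (R Rinv : ℤ → ℤ → ℂ)
    (hanti : ∀ k l : ℤ, ψ k * ψt l + ψt l * ψ k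
      = if k + l + 1 = 0 then (1 : Module.End ℂ H) else 0)
    (hpsi : ∀ k l : ℤ, ψ k * ψ l + ψ l * ψ k = 0)
    (hpsit : ∀ k l : ℤ, ψt k * ψt l + ψt l * ψt k = 0)
    (hRrow : ∀ k : ℤ, (Function.support fun l => R k l).Finite)
    (hRcol : ∀ l : ℤ, (Function.support fun k => R k l).Finite)
    (hRinvRow : ∀ k : ℤ, (Function.support fun l => Rinv k l).Finite)
    (hRinvCol : ∀ l : ℤ, (Function.support fun k => Rinv k l).Finite)
    (hinv : ∀ k l : ℤ, (∑ᶠ u : ℤ, R k u * Rinv u l) = if k = l then 1 else 0)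
    (hinv' : ∀ k l : ℤ, (∑ᶠ u : ℤ, Rinv k u * R u l) = if k = l then 1 else 0)
    (hconj : ∀ (k : ℤ) (x : H), O.symm (ψ k (O x)) = ∑ᶠ l : ℤ, R k l • ψ l x)
    (hconjt : ∀ (k : ℤ) (x : H),
      O.symm (ψt (-k - 1) (O x)) = ∑ᶠ l : ℤ, Rinv l k • ψt (-l - 1) x)
    (hfin : ∀ x : H ⊗[ℂ] H,
      (Function.support fun k : ℤ =>
        TensorProduct.map (ψ (-k - 1) : H →ₗ[ℂ] H) (ψt k : H →ₗ[ℂ] H) x).Finite) :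
    ∀ x : H ⊗[ℂ] H,
      TensorProduct.map O.toLinearMap O.toLinearMap
          (∑ᶠ k : ℤ, TensorProduct.map (ψ (-k - 1) : H →ₗ[ℂ] H) (ψt k : H →ₗ[ℂ] H) x)
        = ∑ᶠ k : ℤ, TensorProduct.map (ψ (-k - 1) : H →ₗ[ℂ] H) (ψt k : H →ₗ[ℂ] H)
            (TensorProduct.map O.toLinearMap O.toLinearMap x) :=
  hirota_bilinear_commutation_general ψ ψt O R Rinv hanti hRrow hRcol hRinvRow hRinvCol hinv' hconj
    hconjt hfin
end
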